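/- arXiv:1709.00080 — 2 statements merged into one kernel-verified Lean document; each statement's English description precedes it below -/
import Mathlib

section
/- Under the hypotheses of the previous operator bound, the bilinear form satisfies |∑_{u,v} F(u) G(v) K(u,v) conj(K(u−h, v+h))| ≤ C·max(p^{1−4α}, p^{1−β})^{1/2} ·(∑_u |F(u)|²)^{1/2} (∑_v |G(v)|²)^{1/2} for all F, G : ZMod p → ℂ. -/
/-!
Write the form as `∑ u, F u * S u` with `S u = ∑ v, G v * T u v` and
`T u v = K u v * conj (K (u - h) (v + h))`. Cauchy–Schwarz in `u` reduces the claim to bounding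
`∑ u, ‖S u‖²`, and expanding that square (the `T T*` argument) produces exactly the fourth moments
`I (v, v', h) = ∑ u, T u v * conj (T u v')`. These are at most `p (C₁ p^{-α})⁴` on the sparse set
`D`, whose rows and columns have at most `M` points, and at most `C₂ p^{-β}` off it; a Schur-type
bound then gives `∑ u, ‖S u‖² ≤ (M C₁⁴ p^{1-4α} + |C₂| p^{1-β}) ∑ v, ‖G v‖²`.
-/

open Finset

section TTStar

variable {𝕜 ι κ : Type*} [RCLike 𝕜] [Fintype ι] [Fintype κ]

theorem norm_sum_sum_mul_le (F : ι → 𝕜) (G : κ → 𝕜) (T : ι → κ → 𝕜) :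
    ‖∑ u, ∑ v, F u * G v * T u v‖ ≤
      √(∑ u, ‖F u‖ ^ 2) * √(∑ u, ‖∑ v, G v * T u v‖ ^ 2) :=
  calc ‖∑ u, ∑ v, F u * G v * T u v‖ = ‖∑ u, F u * ∑ v, G v * T u v‖ := by
        simp only [mul_sum, mul_assoc]
    _ ≤ ∑ u, ‖F u‖ * ‖∑ v, G v * T u v‖ :=
        (norm_sum_le _ _).trans_eq (by simp only [norm_mul])
    _ ≤ _ := Real.sum_mul_le_sqrt_mul_sqrt _ _ _

theorem ofReal_sum_norm_sq_sum_mul (G : κ → 𝕜) (T : ι → κ → 𝕜) :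
    ((∑ u, ‖∑ v, G v * T u v‖ ^ 2 : ℝ) : 𝕜) =
      ∑ v, ∑ v', G v * star (G v') * ∑ u, T u v * star (T u v') := by
  have square : ∀ u, ((‖∑ v, G v * T u v‖ ^ 2 : ℝ) : 𝕜) =
      ∑ v, ∑ v', G v * star (G v') * (T u v * star (T u v')) := by
    intro u
    rw [RCLike.ofReal_pow, ← RCLike.mul_conj, ← RCLike.star_def, star_sum, sum_mul_sum]
    simp only [star_mul']
    exact sum_congr rfl fun v _ => sum_congr rfl fun v' _ => by ring
  simp only [RCLike.ofReal_sum, square, mul_sum]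
  rw [sum_comm]
  exact sum_congr rfl fun v _ => sum_comm

theorem sum_norm_sq_sum_mul_le (G : κ → 𝕜) (T : ι → κ → 𝕜) :
    ∑ u, ‖∑ v, G v * T u v‖ ^ 2 ≤
      ∑ v, ∑ v', ‖G v‖ * ‖G v'‖ * ‖∑ u, T u v * star (T u v')‖ :=
  calc ∑ u, ‖∑ v, G v * T u v‖ ^ 2
      = ‖∑ v, ∑ v', G v * star (G v') * ∑ u, T u v * star (T u v')‖ := by
        rw [← ofReal_sum_norm_sq_sum_mul, RCLike.norm_ofReal, abs_of_nonneg (by positivity)]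
    _ ≤ _ := by
        refine (norm_sum_le _ _).trans (sum_le_sum fun v _ => (norm_sum_le _ _).trans_eq ?_)
        simp only [norm_mul, norm_star]

end TTStar

theorem norm_sum_mul_star_le {𝕜 ι κ : Type*} [RCLike 𝕜] [Fintype ι] {T : ι → κ → 𝕜} {c : ℝ}
    (hT : ∀ u v, ‖T u v‖ ≤ c) (v v' : κ) :
    ‖∑ u, T u v * star (T u v')‖ ≤ Fintype.card ι * c ^ 2 := by
  refine (norm_sum_le _ _).trans ((sum_le_card_nsmul univ _ _ fun u _ => ?_).trans_eq
    (by rw [card_univ, nsmul_eq_mul]))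
  rw [norm_mul, norm_star, sq]
  exact mul_le_mul (hT u v) (hT u v') (norm_nonneg _) ((norm_nonneg _).trans (hT u v))

theorem sum_comp_le_mul_sum_of_card_fiber_le {α β : Type*} [Fintype β] [DecidableEq β]
    (D : Finset α) (g : α → β) {M : ℕ} (hM : ∀ y, #(D.filter fun z => g z = y) ≤ M)
    {f : β → ℝ} (hf : 0 ≤ f) : ∑ z ∈ D, f (g z) ≤ M * ∑ y, f y := by
  rw [← sum_fiberwise D g, mul_sum]
  refine sum_le_sum fun y _ => ?_
  calc ∑ z ∈ D.filter (fun z => g z = y), f (g z)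
      = #(D.filter fun z => g z = y) * f y := by
        rw [sum_congr rfl fun z hz => by rw [(mem_filter.1 hz).2], sum_const, nsmul_eq_mul]
    _ ≤ M * f y := by gcongr; exacts [hf y, hM y]

section Sparse

variable {ι : Type*} [Fintype ι] [DecidableEq ι] {D : Finset (ι × ι)} {M : ℕ}

theorem sum_mul_le_of_card_fiber_le (hrow : ∀ y, #(D.filter fun z => z.1 = y) ≤ M)
    (hcol : ∀ y, #(D.filter fun z => z.2 = y) ≤ M) (b : ι → ℝ) :
    ∑ z ∈ D, b z.1 * b z.2 ≤ M * ∑ y, b y ^ 2 := by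
  have hsq : (0 : ι → ℝ) ≤ fun y => b y ^ 2 := fun y => sq_nonneg (b y)
  have hfst := sum_comp_le_mul_sum_of_card_fiber_le D Prod.fst hrow hsq
  have hsnd := sum_comp_le_mul_sum_of_card_fiber_le D Prod.snd hcol hsq
  have amgm : ∑ z ∈ D, 2 * (b z.1 * b z.2) ≤ ∑ z ∈ D, (b z.1 ^ 2 + b z.2 ^ 2) :=
    sum_le_sum fun z _ => by rw [← mul_assoc]; exact two_mul_le_add_sq _ _
  rw [← mul_sum, sum_add_distrib] at amgm
  linarith

theorem sum_sum_mul_mul_le_of_card_fiber_le (hrow : ∀ y, #(D.filter fun z => z.1 = y) ≤ M)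
    (hcol : ∀ y, #(D.filter fun z => z.2 = y) ≤ M) {w : ι → ι → ℝ} {A B : ℝ}
    (hA : 0 ≤ A) (hB : 0 ≤ B) (hwD : ∀ v v', (v, v') ∈ D → w v v' ≤ A)
    (hw : ∀ v v', (v, v') ∉ D → w v v' ≤ B) {b : ι → ℝ} (hb : 0 ≤ b) :
    ∑ v, ∑ v', b v * b v' * w v v' ≤ (M * A + Fintype.card ι * B) * ∑ v, b v ^ 2 := by
  have hsplit : ∀ v v', w v v' ≤ (if (v, v') ∈ D then A else 0) + B := by
    intro v v'
    split_ifs with hvD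
    · linarith [hwD v v' hvD]
    · linarith [hw v v' hvD]
  have sum_on_D : ∑ v, ∑ v', b v * b v' * (if (v, v') ∈ D then A else 0) =
      A * ∑ z ∈ D, b z.1 * b z.2 := by
    rw [← sum_product' (f := fun v v' => b v * b v' * (if (v, v') ∈ D then A else 0)), mul_sum]
    simp only [mul_ite, mul_zero, univ_product_univ, sum_ite_mem, univ_inter]
    exact sum_congr rfl fun z _ => by ring
  have sum_const_B : ∑ v, ∑ v', b v * b v' * B = B * (∑ v, b v) ^ 2 := by
    rw [sq, sum_mul_sum, mul_sum]
    exact sum_congr rfl fun v _ => by rw [mul_sum]; exact sum_congr rfl fun v' _ => by ring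
  calc ∑ v, ∑ v', b v * b v' * w v v'
      ≤ ∑ v, ∑ v', b v * b v' * ((if (v, v') ∈ D then A else 0) + B) := by
        gcongr with v _ v' _
        · exact mul_nonneg (hb v) (hb v')
        · exact hsplit v v'
    _ = A * ∑ z ∈ D, b z.1 * b z.2 + B * (∑ v, b v) ^ 2 := by
        simp only [mul_add, sum_add_distrib, sum_on_D, sum_const_B]
    _ ≤ A * (M * ∑ y, b y ^ 2) + B * (Fintype.card ι * ∑ v, b v ^ 2) := by
        gcongr
        · exact sum_mul_le_of_card_fiber_le hrow hcol b
        · exact sq_sum_le_card_mul_sum_sq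
    _ = (M * A + Fintype.card ι * B) * ∑ v, b v ^ 2 := by ring

theorem norm_sum_sum_mul_le_of_gram_le {𝕜 : Type*} [RCLike 𝕜] {T : ι → ι → 𝕜}
    (hrow : ∀ y, #(D.filter fun z => z.1 = y) ≤ M)
    (hcol : ∀ y, #(D.filter fun z => z.2 = y) ≤ M) {A B : ℝ} (hA : 0 ≤ A) (hB : 0 ≤ B)
    (hTD : ∀ v v', (v, v') ∈ D → ‖∑ u, T u v * star (T u v')‖ ≤ A)
    (hT : ∀ v v', (v, v') ∉ D → ‖∑ u, T u v * star (T u v')‖ ≤ B) (F G : ι → 𝕜) :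
    ‖∑ u, ∑ v, F u * G v * T u v‖ ≤
      √(M * A + Fintype.card ι * B) * √(∑ u, ‖F u‖ ^ 2) * √(∑ v, ‖G v‖ ^ 2) := by
  have hS := (sum_norm_sq_sum_mul_le G T).trans
    (sum_sum_mul_mul_le_of_card_fiber_le hrow hcol hA hB hTD hT fun v => norm_nonneg (G v))
  calc ‖∑ u, ∑ v, F u * G v * T u v‖
      ≤ √(∑ u, ‖F u‖ ^ 2) * √(∑ u, ‖∑ v, G v * T u v‖ ^ 2) := norm_sum_sum_mul_le F G T
    _ ≤ √(∑ u, ‖F u‖ ^ 2) * √((M * A + Fintype.card ι * B) * ∑ v, ‖G v‖ ^ 2) := by gcongr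
    _ = _ := by rw [Real.sqrt_mul (by positivity)]; ring

end Sparse

theorem mul_rpow_neg_eq_rpow_one_sub {x : ℝ} (hx : 0 < x) (a : ℝ) :
    x * x ^ (-a) = x ^ (1 - a) := by
  rw [sub_eq_add_neg, Real.rpow_add hx, Real.rpow_one]

theorem mul_mul_rpow_neg_pow {x : ℝ} (hx : 0 < x) (c a : ℝ) (n : ℕ) :
    x * (c * x ^ (-a)) ^ n = c ^ n * x ^ (1 - n * a) := by
  rw [mul_pow, ← Real.rpow_mul_natCast hx.le, show -a * n = -(n * a) by ring,
    ← mul_rpow_neg_eq_rpow_one_sub hx]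
  ring

/-- Bilinear form estimate (Proposition 2.1-type): under the single-kernel bound
`|K| ≤ C₁ p^{−α}` and the off-(generalized-)diagonal fourth-moment bound `|I| ≤ C₂ p^{−β}`,
`|∑_{u,v} F(u) G(v) K(u,v) conj(K(u−h,v+h))| ≤ C max(p^{1−4α}, p^{1−β})^{1/2} ‖F‖_{ℓ²} ‖G‖_{ℓ²}`. -/
theorem bilinear_form_estimate (C₁ C₂ : ℝ) (M : ℕ) :
    ∃ C : ℝ, 0 < C ∧
      ∀ (p : ℕ) [Fact p.Prime] (h : ZMod p), h ≠ 0 →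
        ∀ (K : ZMod p → ZMod p → ℂ) (α β : ℝ) (D : Finset (ZMod p × ZMod p)),
          (∀ x y : ZMod p, ‖K x y‖ ≤ C₁ * (p : ℝ) ^ (-α)) →
          (∀ y : ZMod p, (D.filter fun q => q.1 = y).card ≤ M) →
          (∀ y' : ZMod p, (D.filter fun q => q.2 = y').card ≤ M) →
          (∀ y y' : ZMod p, (y, y') ∉ D →
            ‖∑ x : ZMod p,
              K x y * star (K (x - h) (y + h)) * star (K x y') * K (x - h) (y' + h)‖
              ≤ C₂ * (p : ℝ) ^ (-β)) →
          ∀ F G : ZMod p → ℂ,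
            ‖∑ u : ZMod p, ∑ v : ZMod p,
                F u * G v * K u v * star (K (u - h) (v + h))‖
              ≤ C * (max ((p : ℝ) ^ (1 - 4 * α)) ((p : ℝ) ^ (1 - β))) ^ ((1 : ℝ)/2) *
                (∑ u : ZMod p, ‖F u‖ ^ 2) ^ ((1 : ℝ)/2) *
                (∑ v : ZMod p, ‖G v‖ ^ 2) ^ ((1 : ℝ)/2) := by
  refine ⟨√(C₁ ^ 4 * M + |C₂| + 1), by positivity, ?_⟩
  intro p _ h _ K α β D hK hrow hcol hI F G
  have hp : (0 : ℝ) < p := by exact_mod_cast (Fact.out : p.Prime).pos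
  set T : ZMod p → ZMod p → ℂ := fun u v => K u v * star (K (u - h) (v + h))
  have hT : ∀ u v, ‖T u v‖ ≤ (C₁ * p ^ (-α)) ^ 2 := fun u v => by
    rw [norm_mul, norm_star, sq]
    exact mul_le_mul (hK _ _) (hK _ _) (norm_nonneg _) ((norm_nonneg _).trans (hK 0 0))
  have gram_eq : ∀ v v', ∑ u, T u v * star (T u v') =
      ∑ x, K x v * star (K (x - h) (v + h)) * star (K x v') * K (x - h) (v' + h) :=
    fun v v' => sum_congr rfl fun x _ => by simp only [T, star_mul', star_star]; ring
  have hbilinear := norm_sum_sum_mul_le_of_gram_le hrow hcol (T := T)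
    (A := p * (C₁ * p ^ (-α)) ^ 4) (B := |C₂| * p ^ (-β)) (by positivity) (by positivity)
    (fun v v' _ => (norm_sum_mul_star_le hT v v').trans_eq (by rw [ZMod.card]; ring))
    (fun v v' hvD => gram_eq v v' ▸ (hI v v' hvD).trans (by gcongr; exact le_abs_self C₂)) F G
  set m := max ((p : ℝ) ^ (1 - 4 * α)) ((p : ℝ) ^ (1 - β))
  have hconst : M * (p * (C₁ * p ^ (-α)) ^ 4) + p * (|C₂| * p ^ (-β)) ≤
      (C₁ ^ 4 * M + |C₂| + 1) * m := by
    rw [mul_mul_rpow_neg_pow hp, mul_left_comm (p : ℝ), mul_rpow_neg_eq_rpow_one_sub hp]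
    have hm : 0 ≤ m := (Real.rpow_pos_of_pos hp _).le.trans (le_max_left _ _)
    calc M * (C₁ ^ 4 * p ^ (1 - (4 : ℕ) * α)) + |C₂| * p ^ (1 - β)
        ≤ M * (C₁ ^ 4 * m) + |C₂| * m := by
          gcongr; exacts [by exact_mod_cast le_max_left _ _, le_max_right _ _]
      _ ≤ (C₁ ^ 4 * M + |C₂| + 1) * m := by nlinarith
  calc ‖∑ u : ZMod p, ∑ v : ZMod p, F u * G v * K u v * star (K (u - h) (v + h))‖
      = ‖∑ u, ∑ v, F u * G v * T u v‖ := by simp only [T, mul_assoc]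
    _ ≤ √((C₁ ^ 4 * M + |C₂| + 1) * m) * √(∑ u, ‖F u‖ ^ 2) * √(∑ v, ‖G v‖ ^ 2) := by
        refine hbilinear.trans ?_
        rw [ZMod.card]
        gcongr
    _ = _ := by rw [Real.sqrt_mul (by positivity)]; simp only [Real.sqrt_eq_rpow]
end

section
/- Let p be prime and K : ZMod p × ZMod p → ℂ. Suppose for every h ∈ (ZMod p)* and all F, G : ZMod p → ℂ, |∑_{u,v} F(u) G(v) K(u,v) conj(K(u−h,v+h))| ≤ B ‖F‖_{ℓ²} ‖G‖_{ℓ²}, and suppose |K(x,y)| ≤ C p^{−α}. Then for all f₁, f₂ : ZMod p → ℂ, ∑_s |∑_n f̂₁(s−n) f̂₂(n) K(s−n,n)|² ≤ (C² p^{−2α} + B) ‖f₁‖₂² ‖f₂‖₂², where f̂ is the normalized Fourier transform and ‖f‖₂ is the normalized L² norm. -/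
open Finset

/-- `e_p(x) = exp(2πi x/p)` for `x ∈ ZMod p`. -/
noncomputable def ep (p : ℕ) (x : ZMod p) : ℂ :=
  Complex.exp (2 * Real.pi * Complex.I * ((x.val : ℂ) / (p : ℂ)))

/-- The normalized discrete Fourier transform `f̂(z) = p⁻¹ ∑ₓ f(x) e_p(−xz)`. -/
noncomputable def dft (p : ℕ) [Fact p.Prime] (f : ZMod p → ℂ) (z : ZMod p) : ℂ :=
  (p : ℂ)⁻¹ * ∑ x : ZMod p, f x * ep p (-(x * z))

/-!
Expanding the square and substituting `n₁ = v`, `n₂ = v + h`, `s = u + v` writes the left-hand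
side as the real part of `∑_h B_h(F_h, G_h)`, where `B_h` is the bilinear form of the hypothesis,
`F_h(u) = f̂₁(u) conj f̂₁(u - h)` and `G_h(v) = f̂₂(v) conj f̂₂(v + h)`. The diagonal `h = 0` is
bounded by `|K|² ≤ C² p^{-2α}`, each `h ≠ 0` by the bilinear hypothesis; Cauchy–Schwarz in `h`
and `∑_h ‖F_h‖² = ‖f̂₁‖⁴` bound their sum by `B ‖f̂₁‖² ‖f̂₂‖²`, and Parseval finishes.
-/

open ZMod ComplexConjugate in
theorem ZMod.sum_norm_sq_dft {N : ℕ} [NeZero N] (Φ : ZMod N → ℂ) :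
    ∑ k, ‖𝓕 Φ k‖ ^ 2 = N * ∑ j, ‖Φ j‖ ^ 2 := by
  have orth (i j : ZMod N) : ∑ k, stdAddChar (-(j * k)) * conj (stdAddChar (-(i * k)))
      = if i - j = 0 then (N : ℂ) else 0 := by
    simp_rw [← AddChar.map_neg_eq_conj, neg_neg, ← AddChar.map_add_eq_mul]
    convert AddChar.sum_mulShift (i - j) (isPrimitive_stdAddChar N) using 3 with k
    · ring
    · simp
  apply Complex.ofReal_injective
  push_cast
  simp_rw [← Complex.mul_conj', dft_apply, smul_eq_mul, map_sum, map_mul, sum_mul_sum, mul_sum]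
  rw [sum_comm]
  refine sum_congr rfl fun j _ => ?_
  calc _ = ∑ i, Φ j * conj (Φ i) * ∑ k, stdAddChar (-(j * k)) * conj (stdAddChar (-(i * k))) := by
        rw [sum_comm]
        simp_rw [mul_sum]
        exact sum_congr rfl fun i _ => sum_congr rfl fun k _ => by ring
    _ = _ := by
        simp_rw [orth, sub_eq_zero, mul_ite, mul_zero, sum_ite_eq', mem_univ, if_true, mul_comm]

theorem ep_eq_stdAddChar {p : ℕ} [NeZero p] (x : ZMod p) : ep p x = ZMod.stdAddChar x := by
  rw [ZMod.stdAddChar_apply, ZMod.toCircle_apply, ep, mul_div_assoc]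

theorem dft_eq_inv_mul_dft {p : ℕ} [Fact p.Prime] (f : ZMod p → ℂ) (z : ZMod p) :
    dft p f z = (p : ℂ)⁻¹ * ZMod.dft f z := by
  simp only [dft, ZMod.dft_apply, ep_eq_stdAddChar, smul_eq_mul, mul_comm]

theorem sum_norm_sq_dft {p : ℕ} [Fact p.Prime] (f : ZMod p → ℂ) :
    ∑ z, ‖dft p f z‖ ^ 2 = (p : ℝ)⁻¹ * ∑ x, ‖f x‖ ^ 2 := by
  simp_rw [dft_eq_inv_mul_dft, norm_mul, mul_pow, ← mul_sum, ZMod.sum_norm_sq_dft, norm_inv,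
    Complex.norm_natCast]
  field_simp

section TTstar

variable {G : Type*} [AddCommGroup G] [Fintype G]

noncomputable def shiftedBilinearForm (K : G → G → ℂ) (h : G) (F F' : G → ℂ) : ℂ :=
  ∑ u, ∑ v, F u * F' v * K u v * star (K (u - h) (v + h))

theorem sum_sum_sum_eq_sum_sum_sum_shift {M : Type*} [AddCommMonoid M] (φ : G → G → G → M) :
    ∑ s, ∑ n, ∑ m, φ s n m = ∑ h, ∑ u, ∑ v, φ (u + v) v (v + h) := by
  calc ∑ s, ∑ n, ∑ m, φ s n m = ∑ n, ∑ s, ∑ h, φ s n (n + h) := by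
        rw [sum_comm]
        exact sum_congr rfl fun n _ => sum_congr rfl fun s _ =>
          (Equiv.sum_comp (Equiv.addLeft n) (φ s n)).symm
    _ = ∑ v, ∑ u, ∑ h, φ (u + v) v (v + h) := sum_congr rfl fun v _ =>
        (Equiv.sum_comp (Equiv.addRight v) (fun s => ∑ h, φ s v (v + h))).symm
    _ = ∑ v, ∑ h, ∑ u, φ (u + v) v (v + h) := sum_congr rfl fun v _ => sum_comm
    _ = ∑ h, ∑ u, ∑ v, φ (u + v) v (v + h) := by
        rw [sum_comm]
        exact sum_congr rfl fun h _ => sum_comm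

theorem sum_norm_sq_sum_eq_re_sum_shiftedBilinearForm (K : G → G → ℂ) (a b : G → ℂ) :
    ∑ s, ‖∑ n, a (s - n) * b n * K (s - n) n‖ ^ 2
      = (∑ h, shiftedBilinearForm K h (fun u => a u * star (a (u - h)))
          (fun v => b v * star (b (v + h)))).re := by
  have norm_sq_eq_re (z : ℂ) : ‖z‖ ^ 2 = (z * star z).re := by
    rw [Complex.star_def, Complex.mul_conj']
    norm_cast
  simp_rw [norm_sq_eq_re, star_sum, sum_mul_sum]
  rw [← Complex.re_sum, sum_sum_sum_eq_sum_sum_sum_shift]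
  simp only [shiftedBilinearForm]
  congr 1
  refine sum_congr rfl fun h _ => sum_congr rfl fun u _ => sum_congr rfl fun v _ => ?_
  rw [add_sub_cancel_right, show u + v - (v + h) = u - h by abel, star_mul', star_mul']
  ring

theorem norm_shiftedBilinearForm_le {K : G → G → ℂ} {c : ℝ} (hK : ∀ x y, ‖K x y‖ ≤ c)
    (h : G) (F F' : G → ℂ) :
    ‖shiftedBilinearForm K h F F'‖ ≤ c ^ 2 * (∑ u, ‖F u‖) * ∑ v, ‖F' v‖ := by
  have hc : 0 ≤ c := (norm_nonneg _).trans (hK 0 0)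
  calc ‖shiftedBilinearForm K h F F'‖ ≤ ∑ u, ∑ v, c ^ 2 * ‖F u‖ * ‖F' v‖ := by
        refine (norm_sum_le _ _).trans (sum_le_sum fun u _ =>
          (norm_sum_le _ _).trans (sum_le_sum fun v _ => ?_))
        rw [norm_mul, norm_mul, norm_mul, norm_star, sq]
        have := mul_le_mul (hK u v) (hK (u - h) (v + h)) (norm_nonneg _) hc
        nlinarith [mul_nonneg (norm_nonneg (F u)) (norm_nonneg (F' v))]
    _ = c ^ 2 * (∑ u, ‖F u‖) * ∑ v, ‖F' v‖ := by simp_rw [mul_assoc, sum_mul_sum, mul_sum]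

omit [AddCommGroup G] in
theorem sum_sum_mul_comp_eq_sq {R : Type*} [CommSemiring R] (w : G → R) (e : G → G ≃ G) :
    ∑ h, ∑ u, w u * w (e u h) = (∑ u, w u) ^ 2 := by
  rw [sum_comm]
  simp_rw [← mul_sum, Equiv.sum_comp (e _) w, ← sum_mul, sq]

theorem sum_sqrt_mul_sqrt_shift_le (a b : G → ℂ) :
    ∑ h, √(∑ u, ‖a u * star (a (u - h))‖ ^ 2) * √(∑ v, ‖b v * star (b (v + h))‖ ^ 2)
      ≤ (∑ u, ‖a u‖ ^ 2) * ∑ v, ‖b v‖ ^ 2 := by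
  refine (Real.sum_sqrt_mul_sqrt_le _ (fun _ => by positivity) (fun _ => by positivity)).trans_eq ?_
  simp_rw [norm_mul, norm_star, mul_pow]
  have hsub : ∑ h, ∑ u, ‖a u‖ ^ 2 * ‖a (u - h)‖ ^ 2 = (∑ u, ‖a u‖ ^ 2) ^ 2 :=
    sum_sum_mul_comp_eq_sq _ Equiv.subLeft
  have hadd : ∑ h, ∑ v, ‖b v‖ ^ 2 * ‖b (v + h)‖ ^ 2 = (∑ v, ‖b v‖ ^ 2) ^ 2 :=
    sum_sum_mul_comp_eq_sq _ Equiv.addLeft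
  rw [hsub, hadd, Real.sqrt_sq (by positivity), Real.sqrt_sq (by positivity)]

theorem nonneg_of_norm_shiftedBilinearForm_le [Nontrivial G] {K : G → G → ℂ} {B : ℝ}
    (hbil : ∀ h ≠ 0, ∀ F F' : G → ℂ,
      ‖shiftedBilinearForm K h F F'‖ ≤ B * √(∑ u, ‖F u‖ ^ 2) * √(∑ v, ‖F' v‖ ^ 2)) :
    0 ≤ B := by
  obtain ⟨h, hh⟩ := exists_ne (0 : G)
  have := (norm_nonneg _).trans (hbil h hh 1 1)
  simp only [Pi.one_apply, norm_one, one_pow, sum_const, card_univ, nsmul_eq_mul, mul_one,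
    mul_assoc, Real.mul_self_sqrt (Nat.cast_nonneg _)] at this
  exact nonneg_of_mul_nonneg_left this (by exact_mod_cast Fintype.card_pos)

theorem sum_norm_sq_conv_le [Nontrivial G] {K : G → G → ℂ} {B c : ℝ}
    (hbil : ∀ h ≠ 0, ∀ F F' : G → ℂ,
      ‖shiftedBilinearForm K h F F'‖ ≤ B * √(∑ u, ‖F u‖ ^ 2) * √(∑ v, ‖F' v‖ ^ 2))
    (hK : ∀ x y, ‖K x y‖ ≤ c) (a b : G → ℂ) :
    ∑ s, ‖∑ n, a (s - n) * b n * K (s - n) n‖ ^ 2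
      ≤ (c ^ 2 + B) * (∑ u, ‖a u‖ ^ 2) * ∑ v, ‖b v‖ ^ 2 := by
  classical
  have hB := nonneg_of_norm_shiftedBilinearForm_le hbil
  set Z : G → ℂ := fun h => shiftedBilinearForm K h (fun u => a u * star (a (u - h)))
    (fun v => b v * star (b (v + h)))
  have diagonal : (Z 0).re ≤ c ^ 2 * (∑ u, ‖a u‖ ^ 2) * ∑ v, ‖b v‖ ^ 2 := by
    refine (Complex.re_le_norm _).trans ((norm_shiftedBilinearForm_le hK _ _ _).trans_eq ?_)
    simp only [sub_zero, add_zero, norm_mul, norm_star, sq]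
  have off_diagonal : (∑ h ∈ univ.erase 0, Z h).re ≤ B * ((∑ u, ‖a u‖ ^ 2) * ∑ v, ‖b v‖ ^ 2) :=
    calc (∑ h ∈ univ.erase 0, Z h).re ≤ ∑ h ∈ univ.erase 0, ‖Z h‖ :=
          (Complex.re_le_norm _).trans (norm_sum_le _ _)
      _ ≤ ∑ h ∈ univ.erase 0, B * (√(∑ u, ‖a u * star (a (u - h))‖ ^ 2)
            * √(∑ v, ‖b v * star (b (v + h))‖ ^ 2)) :=
          sum_le_sum fun h hh => (hbil h (ne_of_mem_erase hh) _ _).trans_eq (mul_assoc _ _ _)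
      _ ≤ ∑ h, B * (√(∑ u, ‖a u * star (a (u - h))‖ ^ 2)
            * √(∑ v, ‖b v * star (b (v + h))‖ ^ 2)) :=
          sum_le_sum_of_subset_of_nonneg (erase_subset _ _) fun _ _ _ =>
            mul_nonneg hB (by positivity)
      _ ≤ B * ((∑ u, ‖a u‖ ^ 2) * ∑ v, ‖b v‖ ^ 2) := by
          rw [← mul_sum]
          exact mul_le_mul_of_nonneg_left (sum_sqrt_mul_sqrt_shift_le a b) hB
  rw [sum_norm_sq_sum_eq_re_sum_shiftedBilinearForm, ← sum_erase_add _ _ (mem_univ 0),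
    Complex.add_re]
  linarith

end TTstar

/-- TT* reduction: if the bilinear forms associated to `K` are bounded by `B` for every
`h ≠ 0`, and `|K| ≤ C p^{−α}`, then
`∑_s |∑_n f̂₁(s−n) f̂₂(n) K(s−n,n)|² ≤ (C² p^{−2α} + B) ‖f₁‖₂² ‖f₂‖₂²`. -/
theorem TTstar_reduction (p : ℕ) [Fact p.Prime] (K : ZMod p → ZMod p → ℂ) (B C α : ℝ)
    (hbil : ∀ h : ZMod p, h ≠ 0 → ∀ F G : ZMod p → ℂ,
      norm (∑ u : ZMod p, ∑ v : ZMod p,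
          F u * G v * K u v * star (K (u - h) (v + h)))
        ≤ B * (∑ u : ZMod p, norm (F u) ^ 2) ^ ((1 : ℝ)/2) *
            (∑ v : ZMod p, norm (G v) ^ 2) ^ ((1 : ℝ)/2))
    (hK : ∀ x y : ZMod p, norm (K x y) ≤ C * (p : ℝ) ^ (-α)) :
    ∀ f₁ f₂ : ZMod p → ℂ,
      ∑ s : ZMod p,
          norm (∑ n : ZMod p, dft p f₁ (s - n) * dft p f₂ n * K (s - n) n) ^ 2
        ≤ (C ^ 2 * (p : ℝ) ^ (-(2 * α)) + B) *
            ((p : ℝ)⁻¹ * ∑ x : ZMod p, norm (f₁ x) ^ 2) *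
            ((p : ℝ)⁻¹ * ∑ x : ZMod p, norm (f₂ x) ^ 2) := by
  intro f₁ f₂
  have hc : (C * (p : ℝ) ^ (-α)) ^ 2 = C ^ 2 * (p : ℝ) ^ (-(2 * α)) := by
    rw [mul_pow, ← Real.rpow_natCast (_ ^ _), ← Real.rpow_mul (Nat.cast_nonneg p)]
    ring_nf
  rw [← hc, ← sum_norm_sq_dft f₁, ← sum_norm_sq_dft f₂]
  refine sum_norm_sq_conv_le (fun h hh F G => ?_) hK _ _
  rw [Real.sqrt_eq_rpow, Real.sqrt_eq_rpow]
  exact hbil h hh F G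
end
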